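/- arXiv:0910.2009 — 2 statements merged into one kernel-verified Lean document; each statement's English description precedes it below -/
import Mathlib

section
/- Let k be a field of characteristic 0, n > 2 an even integer, and let H = C₂(n, -1) be the Hopf algebra generated by a group-like element g and a (1, g)-primitive element x subject to gⁿ = 1, x² = 0, gx = -xg. Then every coquasitriangular structure R on H satisfies R(x, x) = 0; i.e., the coquasitriangular structure on C₂(n, -1) is unique and concentrates on the group algebra part. -/
open TensorProduct Coalgebra

section Defs
variable (k H : Type*) [CommSemiring k] [Semiring H] [Bialgebra k H]

/-- An element is group-like if it is counit-1 and comultiplies diagonally. -/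
def IsGroupLike (a : H) : Prop :=
  Coalgebra.counit (R := k) a = 1 ∧ Coalgebra.comul (R := k) a = a ⊗ₜ[k] a

/-- `x` is `(1,g)`-primitive (skew-primitive). -/
def IsSkewPrimitive (g x : H) : Prop :=
  Coalgebra.comul (R := k) x = g ⊗ₜ[k] x + x ⊗ₜ[k] (1 : H)

/-- Convolution product of two functionals on a coalgebra. -/
noncomputable def convProd {C : Type*} [AddCommMonoid C] [Module k C] [CoalgebraStruct k C]
    (f g : C →ₗ[k] k) : C →ₗ[k] k :=
  LinearMap.mul' k k ∘ₗ TensorProduct.map f g ∘ₗ Coalgebra.comul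

/-- Multiplication in the opposite order, `a ⊗ b ↦ b * a`. -/
noncomputable def swapMul : H ⊗[k] H →ₗ[k] H :=
  LinearMap.mul' k H ∘ₗ (TensorProduct.comm k H H).toLinearMap

/-- A coquasitriangular structure on a bialgebra `H`: a convolution-invertible
bilinear form `R : H × H → k` satisfying `R(ab,c) = R(a,c₁)R(b,c₂)`,
`R(a,bc) = R(a₁,c)R(a₂,b)` and `b₁a₁R(a₂,b₂) = R(a₁,b₁)a₂b₂`. -/
structure CoquasiTriangular where
  /-- the universal `R`-form, as a bilinear map -/
  R : H →ₗ[k] H →ₗ[k] k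
  /-- its convolution inverse -/
  Rbar : H →ₗ[k] H →ₗ[k] k
  inv_left : convProd k (TensorProduct.lift R) (TensorProduct.lift Rbar)
      = Coalgebra.counit (R := k) (A := H ⊗[k] H)
  inv_right : convProd k (TensorProduct.lift Rbar) (TensorProduct.lift R)
      = Coalgebra.counit (R := k) (A := H ⊗[k] H)
  prod_left : ∀ a b : H, R (a * b)
      = LinearMap.mul' k k ∘ₗ TensorProduct.map (R a) (R b) ∘ₗ Coalgebra.comul
  prod_right : ∀ b c : H, R.flip (b * c)
      = LinearMap.mul' k k ∘ₗ TensorProduct.map (R.flip c) (R.flip b) ∘ₗ Coalgebra.comul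
  comm : (TensorProduct.rid k H).toLinearMap
        ∘ₗ TensorProduct.map (swapMul k H) (TensorProduct.lift R)
        ∘ₗ Coalgebra.comul (R := k) (A := H ⊗[k] H)
      = (TensorProduct.lid k H).toLinearMap
        ∘ₗ TensorProduct.map (TensorProduct.lift R) (LinearMap.mul' k H)
        ∘ₗ Coalgebra.comul (R := k) (A := H ⊗[k] H)

end Defs

/-!
Evaluating `R(ab, c) = R(a, c₁) R(b, c₂)` at `x * x = 0` gives `R(x, g)² = 0`, and symmetrically
`R(g, x)² = 0`. Since `R(g, g)` is invertible, expanding `R(g * 1, x)` and `R(x, 1 * g)` then kills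
`R(1, x)` and `R(x, 1)`. With these four values zero, the braiding axiom at `x ⊗ x` reduces to
`R(x, x) • g² = R(x, x) • 1`, and `g²` and `1` are linearly independent because `n > 2`.
-/

namespace CoquasiTriangular

section Semiring

variable {k H : Type*} [CommSemiring k] [Semiring H] [Bialgebra k H] (Q : CoquasiTriangular k H)

theorem R_mul_apply_of_isGroupLike {c : H} (hc : IsGroupLike k H c) (a b : H) :
    Q.R (a * b) c = Q.R a c * Q.R b c := by
  simp [Q.prod_left, hc.2]

theorem R_apply_mul_of_isGroupLike {a : H} (ha : IsGroupLike k H a) (b c : H) :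
    Q.R a (b * c) = Q.R a c * Q.R a b := by
  simpa [ha.2] using LinearMap.congr_fun (Q.prod_right b c) a

theorem R_mul_apply_of_isSkewPrimitive {g x : H} (hx : IsSkewPrimitive k H g x) (a b : H) :
    Q.R (a * b) x = Q.R a g * Q.R b x + Q.R a x * Q.R b 1 := by
  unfold IsSkewPrimitive at hx
  simp [Q.prod_left, hx]

theorem R_apply_mul_of_isSkewPrimitive {g x : H} (hx : IsSkewPrimitive k H g x) (b c : H) :
    Q.R x (b * c) = Q.R g c * Q.R x b + Q.R x c * Q.R 1 b := by
  unfold IsSkewPrimitive at hx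
  simpa [hx] using LinearMap.congr_fun (Q.prod_right b c) x

theorem isUnit_R_of_isGroupLike {a b : H} (ha : IsGroupLike k H a) (hb : IsGroupLike k H b) :
    IsUnit (Q.R a b) := by
  refine IsUnit.of_mul_eq_one (Q.Rbar a b) ?_
  simpa [convProd, ha.1, ha.2, hb.1, hb.2] using LinearMap.congr_fun Q.inv_left (a ⊗ₜ[k] b)

theorem R_one_apply_eq_zero_of_isSkewPrimitive {g x : H} (hg : IsGroupLike k H g)
    (hx : IsSkewPrimitive k H g x) (hgx : Q.R g x = 0) : Q.R 1 x = 0 := by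
  have h := Q.R_mul_apply_of_isSkewPrimitive hx g 1
  rw [mul_one, hgx, zero_mul, add_zero] at h
  exact (Q.isUnit_R_of_isGroupLike hg hg).mul_right_eq_zero.mp h.symm

theorem R_apply_one_eq_zero_of_isSkewPrimitive {g x : H} (hg : IsGroupLike k H g)
    (hx : IsSkewPrimitive k H g x) (hxg : Q.R x g = 0) : Q.R x 1 = 0 := by
  have h := Q.R_apply_mul_of_isSkewPrimitive hx 1 g
  rw [one_mul, hxg, zero_mul, add_zero] at h
  exact (Q.isUnit_R_of_isGroupLike hg hg).mul_right_eq_zero.mp h.symm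

/-- The braiding axiom `b₁a₁R(a₂, b₂) = R(a₁, b₁)a₂b₂` evaluated at `a = b = x`. -/
theorem comm_apply_tmul_self_of_isSkewPrimitive {g x : H} (hx : IsSkewPrimitive k H g x)
    (hx2 : x * x = 0) :
    Q.R x x • (g * g) + Q.R x 1 • (x * g) + Q.R 1 x • (g * x)
      = Q.R x x • 1 + Q.R g x • x + Q.R x g • x := by
  unfold IsSkewPrimitive at hx
  have h := LinearMap.congr_fun Q.comm (x ⊗ₜ[k] x)
  simp only [swapMul, LinearMap.coe_comp, LinearEquiv.coe_coe, Function.comp_apply, comul_tmul,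
    hx, tmul_add, add_tmul, map_add, AlgebraTensorModule.tensorTensorTensorComm_tmul, map_tmul,
    comm_tmul, LinearMap.mul'_apply, lift.tmul, hx2, zero_tmul, add_zero, rid_tmul, tmul_zero,
    one_mul, zero_add, mul_one, lid_tmul] at h
  rw [add_right_comm, h]
  abel

end Semiring

section NoZeroDivisors

variable {k H : Type*} [CommSemiring k] [NoZeroDivisors k] [Semiring H] [Bialgebra k H]
  (Q : CoquasiTriangular k H)

theorem R_left_eq_zero_of_mul_self_eq_zero {c x : H} (hc : IsGroupLike k H c)
    (hx2 : x * x = 0) : Q.R x c = 0 :=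
  mul_self_eq_zero.mp <| by
    rw [← Q.R_mul_apply_of_isGroupLike hc, hx2, map_zero, LinearMap.zero_apply]

theorem R_right_eq_zero_of_mul_self_eq_zero {a x : H} (ha : IsGroupLike k H a)
    (hx2 : x * x = 0) : Q.R a x = 0 :=
  mul_self_eq_zero.mp <| by
    rw [← Q.R_apply_mul_of_isGroupLike ha, hx2, map_zero]

end NoZeroDivisors

end CoquasiTriangular

theorem taft_coquasitriangular_Rxx_eq_zero_general (k H : Type*) [Field k]
    [Ring H] [HopfAlgebra k H] (n : ℕ) (hn : 2 < n)
    (g x : H) (hg : IsGroupLike k H g) (hx : IsSkewPrimitive k H g x)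
    (hx2 : x * x = 0)
    (hindep : LinearIndependent k
      (fun p : Fin n × Fin 2 => g ^ (p.1 : ℕ) * x ^ (p.2 : ℕ)))
    (Q : CoquasiTriangular k H) :
    Q.R x x = 0 ∧ Q.R g x = 0 ∧ Q.R x g = 0 := by
  have hgx := Q.R_right_eq_zero_of_mul_self_eq_zero hg hx2
  have hxg := Q.R_left_eq_zero_of_mul_self_eq_zero hg hx2
  have key := Q.comm_apply_tmul_self_of_isSkewPrimitive hx hx2
  rw [Q.R_apply_one_eq_zero_of_isSkewPrimitive hg hx hxg,
    Q.R_one_apply_eq_zero_of_isSkewPrimitive hg hx hgx, hgx, hxg] at key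
  simp only [zero_smul, add_zero] at key
  have hpair : LinearIndependent k ![g * g, 1] := by
    have hinj : Function.Injective
        (![(⟨2, hn⟩, 0), (⟨0, by omega⟩, 0)] : Fin 2 → Fin n × Fin 2) := by
      intro i j hij
      fin_cases i <;> fin_cases j <;> simp_all [Fin.ext_iff]
    convert hindep.comp _ hinj using 1
    funext i
    fin_cases i <;> simp [sq]
  refine ⟨?_, hgx, hxg⟩
  exact (LinearIndependent.pair_iff.mp hpair _ _ (by rw [neg_smul, key, add_neg_cancel])).1

/-- For the generalized Taft algebra `C₂(n,-1)` (with `n > 2`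
even, over a field of characteristic 0), every coquasitriangular structure `R`
satisfies `R(x,x) = 0` (and `R(g,x) = R(x,g) = 0`), i.e. it concentrates on the
group algebra part. -/
theorem taft_coquasitriangular_Rxx_eq_zero (k H : Type*) [Field k] [CharZero k]
    [Ring H] [HopfAlgebra k H] (n : ℕ) (hn : 2 < n) (hneven : Even n)
    (g x : H) (hg : IsGroupLike k H g) (hx : IsSkewPrimitive k H g x)
    (hgn : g ^ n = 1) (hx2 : x * x = 0) (hgx : g * x = -(x * g))
    (hindep : LinearIndependent k
      (fun p : Fin n × Fin 2 => g ^ (p.1 : ℕ) * x ^ (p.2 : ℕ)))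
    (hspan : ⊤ ≤ Submodule.span k
      (Set.range fun p : Fin n × Fin 2 => g ^ (p.1 : ℕ) * x ^ (p.2 : ℕ)))
    (Q : CoquasiTriangular k H) :
    Q.R x x = 0 ∧ Q.R g x = 0 ∧ Q.R x g = 0 :=
  taft_coquasitriangular_Rxx_eq_zero_general k H n hn g x hg hx hx2 hindep Q
end

section
/- Let k be a field of characteristic 0 and H the Sweedler 4-dimensional Hopf algebra (generated by group-like g with g² = 1 and (1, g)-primitive x with x² = 0, gx = -xg). For every ν ∈ k there is a coquasitriangular structure R_ν on H determined by R(g, g) = -1, R(g, x) = R(x, g) = 0, R(x, x) = ν, R(gx, x) = -ν, R(x, gx) = ν, R(gx, gx) = ν, and these exhaust all coquasitriangular structures with R(g, g) = -1. -/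
/-!
Uniqueness: the axioms `R(ab, c) = R(a, c₁) R(b, c₂)` and `R(a, bc) = R(a₁, c) R(a₂, b)`,
evaluated on `Δg = g ⊗ g` and `Δx = g ⊗ x + x ⊗ 1`, express every value through `R(g, g)` and
`R(x, x)`. Anticommutation `gx = -xg` gives `2 R(g, g) R(x, g) = 0 = 2 R(g, g) R(g, x)`, so both
vanish when `2 ≠ 0`; the values at `gx` then take one more application of each axiom.

Existence: `R_ν` is defined by its matrix in the basis `gⁱxʲ`, and its convolution inverse is the
transposed form `(a, b) ↦ R_ν(b, a)`. All axioms are multilinear, so they need only be checked on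
basis elements, a finite computation.
-/

open TensorProduct Coalgebra

lemma IsSkewPrimitive.comul_groupLike_mul {k H : Type*} [CommSemiring k] [Semiring H]
    [Bialgebra k H] {h g x : H} (hh : IsGroupLike k H h) (hx : IsSkewPrimitive k H g x) :
    comul (R := k) (h * x) = (h * g) ⊗ₜ[k] (h * x) + (h * x) ⊗ₜ[k] h := by
  rw [Bialgebra.comul_mul, hh.2, hx, mul_add, Algebra.TensorProduct.tmul_mul_tmul,
    Algebra.TensorProduct.tmul_mul_tmul, mul_one]

lemma eq_convolution_of_basis {k C ι : Type*} [CommSemiring k] [AddCommMonoid C] [Module k C]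
    [CoalgebraStruct k C] (b : Module.Basis ι k C) (F : C →ₗ[k] C →ₗ[k] C →ₗ[k] k)
    (f g : C →ₗ[k] C →ₗ[k] k)
    (h : ∀ i j l, F (b i) (b j) (b l)
      = LinearMap.mul' k k (TensorProduct.map (f (b i)) (g (b j)) (comul (b l)))) (a c : C) :
    F a c = LinearMap.mul' k k ∘ₗ TensorProduct.map (f a) (g c) ∘ₗ comul := by
  let e := WithConv.linearEquiv k (C →ₗ[k] k)
  let G : C →ₗ[k] C →ₗ[k] C →ₗ[k] k :=
    ((LinearMap.mul k (WithConv (C →ₗ[k] k))).compl₁₂ (e.symm.toLinearMap ∘ₗ f)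
      (e.symm.toLinearMap ∘ₗ g)).compr₂ e.toLinearMap
  have hFG : F = G := LinearMap.ext_basis b b fun i j => b.ext fun l => h i j l
  rw [hFG]
  rfl

namespace CoquasiTriangular

section Semiring

variable {k H : Type*} [CommSemiring k] [Semiring H] [Bialgebra k H] (Q : CoquasiTriangular k H)
  {g x : H}

lemma R_mul_apply (a b c : H) :
    Q.R (a * b) c = LinearMap.mul' k k (TensorProduct.map (Q.R a) (Q.R b) (comul c)) := by
  rw [Q.prod_left]
  rfl

lemma R_apply_mul (a b c : H) :
    Q.R a (b * c) = LinearMap.mul' k k (TensorProduct.map (Q.R.flip c) (Q.R.flip b) (comul a)) :=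
  LinearMap.congr_fun (Q.prod_right b c) a

lemma R_mul_groupLike (hg : IsGroupLike k H g) (a b : H) :
    Q.R (a * b) g = Q.R a g * Q.R b g := by
  simp [R_mul_apply, hg.2]

lemma R_groupLike_mul (hg : IsGroupLike k H g) (a b : H) :
    Q.R g (a * b) = Q.R g b * Q.R g a := by
  simp [R_apply_mul, hg.2]

lemma R_mul_skewPrimitive (hx : IsSkewPrimitive k H g x) (a b : H) :
    Q.R (a * b) x = Q.R a g * Q.R b x + Q.R a x * Q.R b 1 := by
  rw [R_mul_apply, hx]
  simp

lemma R_skewPrimitive_mul (hx : IsSkewPrimitive k H g x) (a b : H) :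
    Q.R x (a * b) = Q.R g b * Q.R x a + Q.R x b * Q.R 1 a := by
  rw [R_apply_mul, hx]
  simp

end Semiring

section Domain

variable {k H : Type*} [CommRing k] [IsDomain k] [Ring H] [Bialgebra k H]
  (Q : CoquasiTriangular k H) {g x : H}

lemma R_apply_groupLike_eq_zero_of_anticomm (hg : IsGroupLike k H g) (hgx : g * x = -(x * g))
    (h2 : (2 : k) ≠ 0) (hgg : Q.R g g ≠ 0) : Q.R x g = 0 := by
  have h := Q.R_mul_groupLike hg g x
  rw [hgx, map_neg, LinearMap.neg_apply, Q.R_mul_groupLike hg] at h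
  have : (2 * Q.R g g) * Q.R x g = 0 := by linear_combination -h
  simpa [h2, hgg] using this

lemma R_groupLike_apply_eq_zero_of_anticomm (hg : IsGroupLike k H g) (hgx : g * x = -(x * g))
    (h2 : (2 : k) ≠ 0) (hgg : Q.R g g ≠ 0) : Q.R g x = 0 := by
  have h := Q.R_groupLike_mul hg g x
  rw [hgx, map_neg, Q.R_groupLike_mul hg] at h
  have : (2 * Q.R g g) * Q.R g x = 0 := by linear_combination -h
  simpa [h2, hgg] using this

theorem R_values_of_R_g_g_eq_neg_one (hg : IsGroupLike k H g) (hx : IsSkewPrimitive k H g x)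
    (hg2 : g * g = 1) (hgx : g * x = -(x * g)) (h2 : (2 : k) ≠ 0) (hQ : Q.R g g = -1) :
    Q.R g x = 0 ∧ Q.R x g = 0 ∧ Q.R (g * x) x = -(Q.R x x) ∧
      Q.R x (g * x) = Q.R x x ∧ Q.R (g * x) (g * x) = Q.R x x := by
  have hgg : Q.R g g ≠ 0 := by simp [hQ]
  have hgx0 := Q.R_groupLike_apply_eq_zero_of_anticomm hg hgx h2 hgg
  have hxg0 := Q.R_apply_groupLike_eq_zero_of_anticomm hg hgx h2 hgg
  have h1g : Q.R 1 g = 1 := by simpa [hg2, hQ] using Q.R_mul_groupLike hg g g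
  have hg1 : Q.R g 1 = 1 := by simpa [hg2, hQ] using Q.R_groupLike_mul hg g g
  have hxgx : Q.R x (g * x) = Q.R x x := by
    simpa [hgx0, h1g] using Q.R_skewPrimitive_mul hx g x
  refine ⟨hgx0, hxg0, by simpa [hQ, hgx0] using Q.R_mul_skewPrimitive hx g x, hxgx, ?_⟩
  simpa [hg1, hxgx, hxg0, hg2, hx.comul_groupLike_mul hg] using Q.R_mul_apply g x (g * x)

end Domain

end CoquasiTriangular

structure SweedlerBasis (k H : Type*) [CommRing k] [Ring H] [Bialgebra k H] where
  g : H
  x : H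
  basis : Module.Basis (Fin 2 × Fin 2) k H
  basis_apply : ∀ p, basis p = g ^ (p.1 : ℕ) * x ^ (p.2 : ℕ)
  isGroupLike : IsGroupLike k H g
  isSkewPrimitive : IsSkewPrimitive k H g x
  g_mul_g : g * g = 1
  x_mul_x : x * x = 0
  g_mul_x : g * x = -(x * g)

namespace SweedlerBasis

variable {k H : Type*} [CommRing k] [Ring H] [Bialgebra k H] (S : SweedlerBasis k H)

attribute [simp] g_mul_g x_mul_x

@[simp] lemma x_mul_g : S.x * S.g = -(S.g * S.x) := by rw [S.g_mul_x, neg_neg]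

@[simp] lemma g_mul_g_mul_x : S.g * (S.g * S.x) = S.x := by rw [← mul_assoc, S.g_mul_g, one_mul]

@[simp] lemma g_mul_x_mul_g : S.g * S.x * S.g = -S.x := by
  rw [mul_assoc, x_mul_g, mul_neg, g_mul_g_mul_x]

@[simp] lemma g_mul_x_mul_x : S.g * S.x * S.x = 0 := by rw [mul_assoc, S.x_mul_x, mul_zero]

@[simp] lemma x_mul_g_mul_x : S.x * (S.g * S.x) = 0 := by
  rw [← mul_assoc, x_mul_g, neg_mul, g_mul_x_mul_x, neg_zero]

@[simp] lemma g_mul_x_mul_g_mul_x : S.g * S.x * (S.g * S.x) = 0 := by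
  rw [mul_assoc, x_mul_g_mul_x, mul_zero]

@[simp] lemma comul_g : comul (R := k) S.g = S.g ⊗ₜ[k] S.g := S.isGroupLike.2

@[simp] lemma comul_x : comul (R := k) S.x = S.g ⊗ₜ[k] S.x + S.x ⊗ₜ[k] 1 := S.isSkewPrimitive

@[simp] lemma comul_g_mul_x :
    comul (R := k) (S.g * S.x) = 1 ⊗ₜ[k] (S.g * S.x) + (S.g * S.x) ⊗ₜ[k] S.g := by
  rw [S.isSkewPrimitive.comul_groupLike_mul S.isGroupLike, S.g_mul_g]

@[simp] lemma counit_g : counit (R := k) S.g = 1 := S.isGroupLike.1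

@[simp] lemma counit_x : counit (R := k) S.x = 0 := by
  have h := congrArg (TensorProduct.lid k H) (Coalgebra.rTensor_counit_comul (R := k) S.x)
  simp only [comul_x, map_add, LinearMap.rTensor_tmul, counit_g, TensorProduct.lid_tmul, one_smul,
    add_eq_left] at h
  simpa using congrArg (counit (R := k)) h

@[simp] lemma counit_g_mul_x : counit (R := k) (S.g * S.x) = 0 := by
  rw [Bialgebra.counit_mul, counit_x, mul_zero]

lemma basis_zero_zero : S.basis (0, 0) = 1 := by simp [S.basis_apply]

/-- Entry `((i, j), (i', j'))` is `R(gⁱxʲ, gⁱ'xʲ')`. -/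
def sweedlerRMatrix (ν : k) : Matrix (Fin 2 × Fin 2) (Fin 2 × Fin 2) k :=
  Matrix.of fun p q => !![!![1, 1; 1, -1] p.1 q.1, 0; 0, !![ν, ν; -ν, ν] p.1 q.1] p.2 q.2

noncomputable def rForm (ν : k) : H →ₗ[k] H →ₗ[k] k :=
  Matrix.toLinearMap₂ S.basis S.basis (sweedlerRMatrix ν)

variable (ν : k)

lemma rForm_basis (p q : Fin 2 × Fin 2) :
    S.rForm ν (S.basis p) (S.basis q) = sweedlerRMatrix ν p q :=
  Matrix.toLinearMap₂_apply_basis ..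

@[simp] lemma rForm_one : S.rForm ν 1 = counit := by
  rw [← S.basis_zero_zero]
  refine S.basis.ext fun q => ?_
  rw [rForm_basis]
  fin_cases q <;> simp [S.basis_apply, sweedlerRMatrix]

@[simp] lemma rForm_apply_one (a : H) : S.rForm ν a 1 = counit (R := k) a := by
  rw [← S.basis_zero_zero]
  refine LinearMap.congr_fun
    (S.basis.ext fun p => ?_ : (S.rForm ν).flip (S.basis (0, 0)) = counit) a
  rw [LinearMap.flip_apply, rForm_basis]
  fin_cases p <;> simp [S.basis_apply, sweedlerRMatrix]

@[simp] lemma rForm_g_g : S.rForm ν S.g S.g = -1 := by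
  simpa [S.basis_apply, sweedlerRMatrix] using S.rForm_basis ν (1, 0) (1, 0)

@[simp] lemma rForm_g_x : S.rForm ν S.g S.x = 0 := by
  simpa [S.basis_apply, sweedlerRMatrix] using S.rForm_basis ν (1, 0) (0, 1)

@[simp] lemma rForm_g_gx : S.rForm ν S.g (S.g * S.x) = 0 := by
  simpa [S.basis_apply, sweedlerRMatrix] using S.rForm_basis ν (1, 0) (1, 1)

@[simp] lemma rForm_x_g : S.rForm ν S.x S.g = 0 := by
  simpa [S.basis_apply, sweedlerRMatrix] using S.rForm_basis ν (0, 1) (1, 0)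

@[simp] lemma rForm_x_x : S.rForm ν S.x S.x = ν := by
  simpa [S.basis_apply, sweedlerRMatrix] using S.rForm_basis ν (0, 1) (0, 1)

@[simp] lemma rForm_x_gx : S.rForm ν S.x (S.g * S.x) = ν := by
  simpa [S.basis_apply, sweedlerRMatrix] using S.rForm_basis ν (0, 1) (1, 1)

@[simp] lemma rForm_gx_g : S.rForm ν (S.g * S.x) S.g = 0 := by
  simpa [S.basis_apply, sweedlerRMatrix] using S.rForm_basis ν (1, 1) (1, 0)

@[simp] lemma rForm_gx_x : S.rForm ν (S.g * S.x) S.x = -ν := by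
  simpa [S.basis_apply, sweedlerRMatrix] using S.rForm_basis ν (1, 1) (0, 1)

@[simp] lemma rForm_gx_gx : S.rForm ν (S.g * S.x) (S.g * S.x) = ν := by
  simpa [S.basis_apply, sweedlerRMatrix] using S.rForm_basis ν (1, 1) (1, 1)

lemma rForm_mul_left (a b : H) : S.rForm ν (a * b)
    = LinearMap.mul' k k ∘ₗ TensorProduct.map (S.rForm ν a) (S.rForm ν b) ∘ₗ comul := by
  refine eq_convolution_of_basis S.basis ((LinearMap.mul k H).compr₂ (S.rForm ν)) _ _
    (fun i j l => ?_) a b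
  fin_cases i <;> fin_cases j <;> fin_cases l <;>
    simp [S.basis_apply, Algebra.TensorProduct.one_def, -Bialgebra.comul_mul]

lemma rForm_mul_right (a b : H) : (S.rForm ν).flip (a * b)
    = LinearMap.mul' k k ∘ₗ TensorProduct.map ((S.rForm ν).flip b) ((S.rForm ν).flip a)
      ∘ₗ comul := by
  refine eq_convolution_of_basis S.basis ((LinearMap.mul k H).flip.compr₂ (S.rForm ν).flip) _ _
    (fun i j l => ?_) b a
  fin_cases i <;> fin_cases j <;> fin_cases l <;>
    simp [S.basis_apply, Algebra.TensorProduct.one_def, -Bialgebra.comul_mul]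

lemma convProd_rForm_flip :
    convProd k (TensorProduct.lift (S.rForm ν)) (TensorProduct.lift (S.rForm ν).flip)
      = counit (R := k) (A := H ⊗[k] H) := by
  refine (S.basis.tensorProduct S.basis).ext fun ⟨p, q⟩ => ?_
  rw [Module.Basis.tensorProduct_apply]
  fin_cases p <;> fin_cases q <;>
    simp [convProd, S.basis_apply, Algebra.TensorProduct.one_def, TensorProduct.tmul_add,
      TensorProduct.add_tmul, -Bialgebra.comul_mul]

lemma convProd_flip_rForm :
    convProd k (TensorProduct.lift (S.rForm ν).flip) (TensorProduct.lift (S.rForm ν))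
      = counit (R := k) (A := H ⊗[k] H) := by
  refine (S.basis.tensorProduct S.basis).ext fun ⟨p, q⟩ => ?_
  rw [Module.Basis.tensorProduct_apply]
  fin_cases p <;> fin_cases q <;>
    simp [convProd, S.basis_apply, Algebra.TensorProduct.one_def, TensorProduct.tmul_add,
      TensorProduct.add_tmul, -Bialgebra.comul_mul]

lemma rForm_comm : (TensorProduct.rid k H).toLinearMap
        ∘ₗ TensorProduct.map (swapMul k H) (TensorProduct.lift (S.rForm ν))
        ∘ₗ comul (R := k) (A := H ⊗[k] H)
      = (TensorProduct.lid k H).toLinearMap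
        ∘ₗ TensorProduct.map (TensorProduct.lift (S.rForm ν)) (LinearMap.mul' k H)
        ∘ₗ comul (R := k) (A := H ⊗[k] H) := by
  refine (S.basis.tensorProduct S.basis).ext fun ⟨p, q⟩ => ?_
  rw [Module.Basis.tensorProduct_apply]
  fin_cases p <;> fin_cases q <;>
    simp [swapMul, S.basis_apply, Algebra.TensorProduct.one_def, TensorProduct.tmul_add,
      TensorProduct.add_tmul, -Bialgebra.comul_mul]

noncomputable def coquasiTriangular : CoquasiTriangular k H where
  R := S.rForm ν
  Rbar := (S.rForm ν).flip
  inv_left := S.convProd_rForm_flip ν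
  inv_right := S.convProd_flip_rForm ν
  prod_left := S.rForm_mul_left ν
  prod_right := S.rForm_mul_right ν
  comm := S.rForm_comm ν

end SweedlerBasis

/-- On the Sweedler 4-dimensional Hopf algebra, for every
`ν ∈ k` there is a coquasitriangular structure with `R(g,g) = -1`,
`R(g,x) = R(x,g) = 0`, `R(x,x) = ν`, `R(gx,x) = -ν`, `R(x,gx) = ν`,
`R(gx,gx) = ν`, and these exhaust all coquasitriangular structures with
`R(g,g) = -1`. -/
theorem sweedler_coquasitriangular_classification (k H : Type*) [Field k]
    [CharZero k] [Ring H] [HopfAlgebra k H]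
    (g x : H) (hg : IsGroupLike k H g) (hx : IsSkewPrimitive k H g x)
    (hg2 : g * g = 1) (hx2 : x * x = 0) (hgx : g * x = -(x * g))
    (hbasis : ∃ b : Module.Basis (Fin 2 × Fin 2) k H,
      ∀ p, b p = g ^ (p.1 : ℕ) * x ^ (p.2 : ℕ)) :
    (∀ ν : k, ∃ Q : CoquasiTriangular k H,
      Q.R g g = -1 ∧ Q.R g x = 0 ∧ Q.R x g = 0 ∧ Q.R x x = ν ∧
      Q.R (g * x) x = -ν ∧ Q.R x (g * x) = ν ∧ Q.R (g * x) (g * x) = ν) ∧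
    (∀ Q : CoquasiTriangular k H, Q.R g g = -1 →
      Q.R g x = 0 ∧ Q.R x g = 0 ∧ Q.R (g * x) x = -(Q.R x x) ∧
      Q.R x (g * x) = Q.R x x ∧ Q.R (g * x) (g * x) = Q.R x x) := by
  obtain ⟨b, hb⟩ := hbasis
  let S : SweedlerBasis k H := ⟨g, x, b, hb, hg, hx, hg2, hx2, hgx⟩
  refine ⟨fun ν => ⟨S.coquasiTriangular ν, ?_⟩, fun Q hQ =>
    Q.R_values_of_R_g_g_eq_neg_one hg hx hg2 hgx two_ne_zero hQ⟩
  exact ⟨S.rForm_g_g ν, S.rForm_g_x ν, S.rForm_x_g ν, S.rForm_x_x ν, S.rForm_gx_x ν,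
    S.rForm_x_gx ν, S.rForm_gx_gx ν⟩
end
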